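/- arXiv:math/0602652 — 6 statements merged into one kernel-verified Lean document; each statement's English description precedes it below -/
import Mathlib

section
/- (Frommer's collinearity theorem.) Let A be an N×N complex matrix, b ∈ ℂ^N, σ ∈ ℂ, and n ≥ 1. Let R and R^σ be polynomials in ℂ[X] of degree at most n with R(0) = R^σ(0) = 1, and set r := R(A) b and r^σ := R^σ(A + σI) b. Let W be a subspace of ℂ^N with dim W = n and W ∩ (K_{n+1}(A, b))ᗮ = {0} (orthogonal complement with respect to the standard Hermitian inner product). If r ⟂ W and r^σ ⟂ W, then r and r^σ are linearly dependent (collinear). -/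
open Module Submodule Polynomial

/-- The `n`-th Krylov subspace `K_n(A, b) = span {b, Ab, …, A^(n-1) b}`,
as a subspace of the Euclidean space `ℂ^N`. -/
noncomputable def Krylov {N : ℕ} (A : Matrix (Fin N) (Fin N) ℂ)
    (b : EuclideanSpace ℂ (Fin N)) (n : ℕ) :
    Submodule ℂ (EuclideanSpace ℂ (Fin N)) :=
  Submodule.span ℂ {v | ∃ j < n, v = (A ^ j).mulVec b}

lemma aeval_mem_Krylov {N n : ℕ} (A : Matrix (Fin N) (Fin N) ℂ)
    (b : EuclideanSpace ℂ (Fin N)) (p : Polynomial ℂ) (hp : p.natDegree ≤ n) :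
    WithLp.toLp 2 ((Polynomial.aeval A p).mulVec b) ∈ Krylov A b (n + 1) := by
  rw [Polynomial.aeval_eq_sum_range' (Nat.lt_succ_of_le hp)]
  have : (∑ i ∈ Finset.range (n+1), p.coeff i • A ^ i).mulVec b
      = ∑ i ∈ Finset.range (n+1), p.coeff i • (A ^ i).mulVec b := by
    induction (Finset.range (n+1)) using Finset.induction with
    | empty => simp [Matrix.mulVec]
    | insert _ _ h ih =>
      rw [Finset.sum_insert h, Finset.sum_insert h, Matrix.add_mulVec, Matrix.smul_mulVec, ih]
  rw [this, WithLp.toLp_sum]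
  simp only [WithLp.toLp_smul]
  refine Submodule.sum_mem _ fun i hi => Submodule.smul_mem _ _ (Submodule.subset_span ?_)
  exact ⟨i, Finset.mem_range.mp hi, rfl⟩

lemma Krylov_finrank_le {N n : ℕ} (A : Matrix (Fin N) (Fin N) ℂ)
    (b : EuclideanSpace ℂ (Fin N)) :
    Module.finrank ℂ (Krylov A b (n+1)) ≤ n + 1 := by
  set f : Fin (n+1) → EuclideanSpace ℂ (Fin N) := fun j => WithLp.toLp 2 ((A ^ (j : ℕ)).mulVec b) with hf
  have h1 : Krylov A b (n+1) ≤ Submodule.span ℂ (Set.range f) := by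
    rw [Krylov, Submodule.span_le]
    rintro v ⟨j, hj, hv⟩
    exact Submodule.subset_span ⟨⟨j, hj⟩, (congrArg (WithLp.toLp 2) hv).symm.trans (WithLp.toLp_ofLp 2 v)⟩
  have h2 : Module.finrank ℂ (Submodule.span ℂ (Set.range f)) ≤ n + 1 := by
    simpa [Set.finrank] using finrank_range_le_card (R := ℂ) f
  exact le_trans (Submodule.finrank_mono h1) h2

/-- Frommer's collinearity theorem. -/
theorem stmt_3 {N n : ℕ} (hn : 1 ≤ n) (A : Matrix (Fin N) (Fin N) ℂ)
    (b : EuclideanSpace ℂ (Fin N)) (σ : ℂ)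
    (R Rσ : Polynomial ℂ) (hRdeg : R.degree ≤ n) (hRσdeg : Rσ.degree ≤ n)
    (hR0 : R.eval 0 = 1) (hRσ0 : Rσ.eval 0 = 1)
    (r rσ : EuclideanSpace ℂ (Fin N))
    (hr : r = (Polynomial.aeval A R).mulVec b)
    (hrσ : rσ = (Polynomial.aeval (A + σ • (1 : Matrix (Fin N) (Fin N) ℂ)) Rσ).mulVec b)
    (W : Submodule ℂ (EuclideanSpace ℂ (Fin N)))
    (hWdim : Module.finrank ℂ W = n)
    (hWK : W ⊓ (Krylov A b (n + 1))ᗮ = ⊥)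
    (hrW : ∀ w ∈ W, (inner ℂ r w : ℂ) = 0)
    (hrσW : ∀ w ∈ W, (inner ℂ rσ w : ℂ) = 0) :
    ¬ LinearIndependent ℂ ![r, rσ] := by
  intro hLI
  set K := Krylov A b (n + 1) with hK
  -- membership of r and rσ in K
  have hrK : r ∈ K := by
    rw [show r = WithLp.toLp 2 (r.ofLp) from rfl, hr]
    exact aeval_mem_Krylov A b R (natDegree_le_iff_degree_le.mpr hRdeg)
  have hrσK : rσ ∈ K := by
    have hcomp : (Polynomial.aeval (A + σ • (1 : Matrix (Fin N) (Fin N) ℂ)) Rσ)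
        = Polynomial.aeval A (Rσ.comp (X + C σ)) := by
      rw [Polynomial.aeval_comp]
      congr 1
      simp [Algebra.algebraMap_eq_smul_one]
    have hdeg : (Rσ.comp (X + C σ)).natDegree ≤ n := by
      rw [Polynomial.natDegree_comp, Polynomial.natDegree_X_add_C, mul_one]
      exact natDegree_le_iff_degree_le.mpr hRσdeg
    rw [show rσ = WithLp.toLp 2 (rσ.ofLp) from rfl, hrσ, hcomp]
    exact aeval_mem_Krylov A b _ hdeg
  set U : Submodule ℂ (EuclideanSpace ℂ (Fin N)) := K ⊓ Wᗮ with hU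
  have hrU : r ∈ U := ⟨hrK, (Submodule.mem_orthogonal' W r).mpr hrW⟩
  have hrσU : rσ ∈ U := ⟨hrσK, (Submodule.mem_orthogonal' W rσ).mpr hrσW⟩
  -- dimension count
  have hUorth : U = (Kᗮ ⊔ W)ᗮ := by
    rw [hU, ← Submodule.inf_orthogonal, Submodule.orthogonal_orthogonal]
  have hEN : Module.finrank ℂ (EuclideanSpace ℂ (Fin N)) = N := finrank_euclideanSpace_fin
  have h1 := Submodule.finrank_add_finrank_orthogonal K
  have h2 := Submodule.finrank_add_finrank_orthogonal U
  rw [hEN] at h1 h2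
  have h3 : Module.finrank ℂ (Kᗮ ⊔ W : Submodule ℂ (EuclideanSpace ℂ (Fin N)))
      + Module.finrank ℂ (Kᗮ ⊓ W : Submodule ℂ (EuclideanSpace ℂ (Fin N)))
      = Module.finrank ℂ Kᗮ + Module.finrank ℂ W :=
    Submodule.finrank_sup_add_finrank_inf_eq _ _
  have h4 : Module.finrank ℂ (Kᗮ ⊓ W : Submodule ℂ (EuclideanSpace ℂ (Fin N))) = 0 := by
    rw [inf_comm, hWK]; exact finrank_bot ℂ _
  have h5 : Module.finrank ℂ Uᗮ
      = Module.finrank ℂ (Kᗮ ⊔ W : Submodule ℂ (EuclideanSpace ℂ (Fin N))) := by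
    rw [hUorth, Submodule.orthogonal_orthogonal]
  have hKle : Module.finrank ℂ K ≤ n + 1 := Krylov_finrank_le A b
  have hUle : Module.finrank ℂ U ≤ 1 := by omega
  -- lift linear independence into U
  set v : Fin 2 → U := ![⟨r, hrU⟩, ⟨rσ, hrσU⟩] with hv
  have hcompv : U.subtype ∘ v = ![r, rσ] := by
    funext i; fin_cases i <;> rfl
  have hvLI : LinearIndependent ℂ v := by
    apply LinearIndependent.of_comp U.subtype
    rw [hcompv]; exact hLI
  have := hvLI.fintype_card_le_finrank
  simp [Fintype.card_fin] at this
  omega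
end

section
/- Let A be an N×N complex symmetric matrix (A = Aᵀ), and let the COCG iteration applied to A x = b with initial guess x_0 generate sequences r_n, p_n and scalars α_n = (r_nᵀ r_n)/(p_nᵀ A p_n), β_n = (r_{n+1}ᵀ r_{n+1})/(r_nᵀ r_n). Fix k ≥ 1 and assume no breakdown up to step k, i.e. r_nᵀ r_n ≠ 0 and p_nᵀ A p_n ≠ 0 for all n < k. Then the residuals are pairwise conjugate-orthogonal: r_iᵀ r_j = 0 for all i ≠ j with i, j ≤ k, where uᵀv denotes the unconjugated bilinear form Σ_j u_j v_j. -/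
open Matrix

theorem stmt_9 {N : ℕ} (A : Matrix (Fin N) (Fin N) ℂ) (hA : Aᵀ = A)
    (b x₀ : Fin N → ℂ) (r p : ℕ → Fin N → ℂ) (α β : ℕ → ℂ)
    (hr0 : r 0 = b - A.mulVec x₀)
    (hp0 : p 0 = r 0)
    (hp : ∀ n, p (n + 1) = r (n + 1) + β n • p n)
    (hα : ∀ n, α n = (r n ⬝ᵥ r n) / (p n ⬝ᵥ A.mulVec (p n)))
    (hr : ∀ n, r (n + 1) = r n - α n • A.mulVec (p n))
    (hβ : ∀ n, β n = (r (n + 1) ⬝ᵥ r (n + 1)) / (r n ⬝ᵥ r n))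
    (k : ℕ) (hk : 1 ≤ k)
    (hbreak : ∀ n < k, r n ⬝ᵥ r n ≠ 0 ∧ p n ⬝ᵥ A.mulVec (p n) ≠ 0) :
    ∀ i ≤ k, ∀ j ≤ k, i ≠ j → r i ⬝ᵥ r j = 0 := by
  have symA : ∀ u v : Fin N → ℂ, u ⬝ᵥ A.mulVec v = v ⬝ᵥ A.mulVec u := by
    intro u v
    rw [dotProduct_mulVec, ← mulVec_transpose, hA, dotProduct_comm]
  have hαne : ∀ n < k, α n ≠ 0 := by
    intro n hn
    rw [hα]
    exact div_ne_zero (hbreak n hn).1 (hbreak n hn).2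
  have hAp : ∀ i, i < k → A.mulVec (p i) = (α i)⁻¹ • (r i - r (i + 1)) := by
    intro i hi
    have h1 : r i - r (i + 1) = α i • A.mulVec (p i) := by
      rw [hr i]; module
    rw [h1, inv_smul_smul₀ (hαne i hi)]
  have main : ∀ m, m ≤ k →
      (∀ i < m, r i ⬝ᵥ r m = 0) ∧ (∀ i < m, p i ⬝ᵥ A.mulVec (p m) = 0) := by
    intro m
    induction m using Nat.strong_induction_on with
    | _ m ih =>
      match m with
      | 0 =>
        intro _
        exact ⟨fun i h => absurd h (Nat.not_lt_zero i),
               fun i h => absurd h (Nat.not_lt_zero i)⟩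
      | Nat.succ m =>
        intro hmk
        have hmk' : m < k := hmk
        -- pairwise orthogonality up to m
        have hRR : ∀ i j, i ≤ m → j ≤ m → i ≠ j → r i ⬝ᵥ r j = 0 := by
          intro i j hi hj hij
          rcases lt_or_gt_of_ne hij with h | h
          · exact ((ih j (Nat.lt_succ_of_le hj) (le_trans hj hmk'.le)).1 i h)
          · rw [dotProduct_comm]
            exact ((ih i (Nat.lt_succ_of_le hi) (le_trans hi hmk'.le)).1 j h)
        have hPP : ∀ i j, i ≤ m → j ≤ m → i ≠ j → p i ⬝ᵥ A.mulVec (p j) = 0 := by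
          intro i j hi hj hij
          rcases lt_or_gt_of_ne hij with h | h
          · exact ((ih j (Nat.lt_succ_of_le hj) (le_trans hj hmk'.le)).2 i h)
          · rw [symA]
            exact ((ih i (Nat.lt_succ_of_le hi) (le_trans hi hmk'.le)).2 j h)
        -- r i ⬝ A p m expressed through p's
        have hrAp : ∀ i, i ≤ m → r i ⬝ᵥ A.mulVec (p m) =
            p i ⬝ᵥ A.mulVec (p m) -
              (if h : i = 0 then 0 else β (i - 1) * (p (i - 1) ⬝ᵥ A.mulVec (p m))) := by
          intro i hi
          match i with
          | 0 => simp [hp0]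
          | Nat.succ j =>
            have := hp j
            have hrj : r (j + 1) = p (j + 1) - β j • p j := by rw [this]; module
            simp [hrj, sub_dotProduct, smul_dotProduct, smul_eq_mul]
        -- new residual orthogonality
        have hR1 : ∀ i, i ≤ m → r i ⬝ᵥ r (m + 1) = 0 := by
          intro i hi
          have hexp : r i ⬝ᵥ r (m + 1) =
              r i ⬝ᵥ r m - α m * (r i ⬝ᵥ A.mulVec (p m)) := by
            rw [hr m]
            simp [dotProduct_sub, dotProduct_smul, smul_eq_mul]
          rcases eq_or_lt_of_le hi with h | h
          · -- i = m
            subst h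
            have h1 : r i ⬝ᵥ A.mulVec (p i) = p i ⬝ᵥ A.mulVec (p i) := by
              rw [hrAp i le_rfl]
              rcases Nat.eq_zero_or_pos i with h0 | h0
              · simp [h0]
              · have hne : i ≠ 0 := Nat.pos_iff_ne_zero.mp h0
                rw [dif_neg hne]
                have : p (i - 1) ⬝ᵥ A.mulVec (p i) = 0 := by
                  apply hPP _ _ (le_trans (Nat.sub_le i 1) le_rfl) le_rfl
                  omega
                rw [this]; ring
            rw [hexp, h1, hα i]
            field_simp [(hbreak i hmk').2]
            ring
          · -- i < m
            have h1 : r i ⬝ᵥ r m = 0 := hRR i m hi le_rfl h.ne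
            have h2 : r i ⬝ᵥ A.mulVec (p m) = 0 := by
              rw [hrAp i hi]
              rcases Nat.eq_zero_or_pos i with h0 | h0
              · subst h0
                simp [hPP 0 m (Nat.zero_le m) le_rfl h.ne]
              · have hne : i ≠ 0 := Nat.pos_iff_ne_zero.mp h0
                rw [dif_neg hne, hPP i m hi le_rfl h.ne,
                  hPP (i - 1) m (le_trans (Nat.sub_le i 1) hi) le_rfl (by omega)]
                ring
            rw [hexp, h1, h2]; ring
        -- new conjugate orthogonality
        have hP1 : ∀ i, i ≤ m → p i ⬝ᵥ A.mulVec (p (m + 1)) = 0 := by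
          intro i hi
          have hik : i < k := lt_of_le_of_lt hi hmk'
          have hexp : p i ⬝ᵥ A.mulVec (p (m + 1)) =
              r (m + 1) ⬝ᵥ A.mulVec (p i) + β m * (p i ⬝ᵥ A.mulVec (p m)) := by
            rw [hp m]
            rw [symA (p i)]
            simp [add_dotProduct, smul_dotProduct, smul_eq_mul, symA (p m) (p i)]
          have hAdot : r (m + 1) ⬝ᵥ A.mulVec (p i) =
              (α i)⁻¹ * (r (m + 1) ⬝ᵥ r i - r (m + 1) ⬝ᵥ r (i + 1)) := by
            rw [hAp i hik]
            simp [dotProduct_smul, dotProduct_sub, smul_eq_mul]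
          have hri : r (m + 1) ⬝ᵥ r i = 0 := by
            rw [dotProduct_comm]; exact hR1 i hi
          rcases eq_or_lt_of_le hi with h | h
          · -- i = m
            subst h
            have hri1 : r (i + 1) ⬝ᵥ r (i + 1) ≠ 0 → True := fun _ => trivial
            have hαi : α i = (r i ⬝ᵥ r i) / (p i ⬝ᵥ A.mulVec (p i)) := hα i
            have hβi : β i = (r (i + 1) ⬝ᵥ r (i + 1)) / (r i ⬝ᵥ r i) := hβ i
            rw [hexp, hAdot, hri, hαi, hβi]
            have h1 := (hbreak i hmk').1
            have h2 := (hbreak i hmk').2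
            field_simp
            ring
          · -- i < m
            have hri1 : r (m + 1) ⬝ᵥ r (i + 1) = 0 := by
              rw [dotProduct_comm]; exact hR1 (i + 1) h
            rw [hexp, hAdot, hri, hri1, hPP i m hi le_rfl h.ne]
            ring
        refine ⟨fun i h => ?_, fun i h => ?_⟩
        · exact hR1 i (Nat.lt_succ_iff.mp h)
        · exact hP1 i (Nat.lt_succ_iff.mp h)
  intro i hi j hj hij
  rcases lt_or_gt_of_ne hij with h | h
  · exact (main j hj).1 i h
  · rw [dotProduct_comm]
    exact (main i hi).1 j h
end

section
/- (Corollary of Frommer's theorem.) Let A be an N×N complex symmetric matrix (A = Aᵀ), b ∈ ℂ^N, and σ ∈ ℂ such that A + σI is also symmetric. Let r_n be the COCG residuals for the system A x = b started from x_0 = 0, and r_n^σ the COCG residuals for the system (A + σI) x = b started from x_0^σ = 0, and fix k ≥ 1 such that neither iteration breaks down up to step k (all quantities r_nᵀ r_n, p_nᵀ A p_n, (r_n^σ)ᵀ r_n^σ, (p_n^σ)ᵀ (A+σI) p_n^σ are nonzero for n < k). Then for every n ≤ k the residuals r_n and r_n^σ are collinear: there exists π_n^σ ∈ ℂ with r_n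 = π_n^σ r_n^σ. -/
open Matrix Submodule Module

namespace COCGFrommer

variable {N : ℕ}

noncomputable def K (M : Matrix (Fin N) (Fin N) ℂ) (b : Fin N → ℂ) (n : ℕ) :
    Submodule ℂ (Fin N → ℂ) :=
  span ℂ (Set.range fun i : Fin n => (M ^ (i : ℕ)).mulVec b)

lemma pow_mem_K {M : Matrix (Fin N) (Fin N) ℂ} {b : Fin N → ℂ} {i n : ℕ} (h : i < n) :
    (M ^ i).mulVec b ∈ K M b n :=
  subset_span ⟨⟨i, h⟩, rfl⟩

lemma K_mono {M : Matrix (Fin N) (Fin N) ℂ} {b : Fin N → ℂ} {m n : ℕ} (h : m ≤ n) :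
    K M b m ≤ K M b n := by
  rw [K, span_le]
  rintro x ⟨i, rfl⟩
  exact pow_mem_K (lt_of_lt_of_le i.2 h)

lemma mulVec_mem_K {M : Matrix (Fin N) (Fin N) ℂ} {b : Fin N → ℂ} {n : ℕ} {x : Fin N → ℂ}
    (hx : x ∈ K M b n) : M.mulVec x ∈ K M b (n + 1) := by
  have : M.mulVecLin x ∈ Submodule.map M.mulVecLin (K M b n) := Submodule.mem_map_of_mem hx
  rw [K, Submodule.map_span] at this
  refine span_le.mpr ?_ this
  rintro _ ⟨_, ⟨i, rfl⟩, rfl⟩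
  simp only [mulVecLin_apply, mulVec_mulVec]
  rw [← pow_succ']
  exact pow_mem_K (by omega)

lemma K_shift_le (M : Matrix (Fin N) (Fin N) ℂ) (c : ℂ) (b : Fin N → ℂ) (n : ℕ) :
    K (M + c • (1 : Matrix (Fin N) (Fin N) ℂ)) b n ≤ K M b n := by
  have key : ∀ i : ℕ, ((M + c • (1 : Matrix (Fin N) (Fin N) ℂ)) ^ i).mulVec b ∈ K M b (i + 1) := by
    intro i
    induction i with
    | zero => simpa using pow_mem_K (M := M) (b := b) (i := 0) Nat.one_pos
    | succ i ih =>
      rw [pow_succ', ← mulVec_mulVec, add_mulVec, smul_mulVec, one_mulVec]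
      exact add_mem (mulVec_mem_K ih) (smul_mem _ _ (K_mono (by omega) ih))
  rw [K, span_le]
  rintro x ⟨i, rfl⟩
  exact K_mono i.2 (key i)

lemma K_shift (M : Matrix (Fin N) (Fin N) ℂ) (c : ℂ) (b : Fin N → ℂ) (n : ℕ) :
    K (M + c • (1 : Matrix (Fin N) (Fin N) ℂ)) b n = K M b n := by
  refine le_antisymm (K_shift_le M c b n) ?_
  have := K_shift_le (M + c • (1 : Matrix (Fin N) (Fin N) ℂ)) (-c) b n
  simpa using this

lemma symm_dot {M : Matrix (Fin N) (Fin N) ℂ} (hM : Mᵀ = M) (x y : Fin N → ℂ) :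
    M.mulVec x ⬝ᵥ y = x ⬝ᵥ M.mulVec y := by
  rw [dotProduct_mulVec, ← mulVec_transpose, hM]

lemma sum_dot {ι : Type*} (s : Finset ι) (f : ι → Fin N → ℂ) (y : Fin N → ℂ) :
    (∑ i ∈ s, f i) ⬝ᵥ y = ∑ i ∈ s, f i ⬝ᵥ y := by
  simp only [dotProduct, Finset.sum_apply, Finset.sum_mul]
  exact Finset.sum_comm


section Iteration

variable {M : Matrix (Fin N) (Fin N) ℂ} {b : Fin N → ℂ}
  {r p : ℕ → Fin N → ℂ} {α β : ℕ → ℂ}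

lemma mem_station (hr0 : r 0 = b) (hp0 : p 0 = r 0)
    (hp : ∀ n, p (n + 1) = r (n + 1) + β n • p n)
    (hr : ∀ n, r (n + 1) = r n - α n • M.mulVec (p n)) :
    ∀ n, r n ∈ K M b (n + 1) ∧ p n ∈ K M b (n + 1) := by
  intro n
  induction n with
  | zero =>
    have hb : b ∈ K M b 1 := by simpa using pow_mem_K (M := M) (b := b) (i := 0) Nat.one_pos
    exact ⟨hr0 ▸ hb, by rw [hp0, hr0]; exact hb⟩
  | succ n ih =>
    have h1 : r (n + 1) ∈ K M b (n + 2) := by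
      rw [hr n]
      exact sub_mem (K_mono (by omega) ih.1) (smul_mem _ _ (mulVec_mem_K ih.2))
    exact ⟨h1, by rw [hp n]; exact add_mem h1 (smul_mem _ _ (K_mono (by omega) ih.2))⟩

lemma resid_sub (hr0 : r 0 = b)
    (hp : ∀ n, p (n + 1) = r (n + 1) + β n • p n)
    (hr : ∀ n, r (n + 1) = r n - α n • M.mulVec (p n))
    (hp0 : p 0 = r 0) :
    ∀ n, ∃ y ∈ K M b n, r n = b - M.mulVec y := by
  intro n
  induction n with
  | zero => exact ⟨0, zero_mem _, by simp [hr0]⟩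
  | succ n ih =>
    obtain ⟨y, hy, hyr⟩ := ih
    refine ⟨y + α n • p n, add_mem (K_mono (by omega) hy)
      (smul_mem _ _ (mem_station hr0 hp0 hp hr n).2), ?_⟩
    rw [hr n, hyr, mulVec_add, mulVec_smul]
    abel

lemma ortho (hM : Mᵀ = M) (hr0 : r 0 = b) (hp0 : p 0 = r 0)
    (hp : ∀ n, p (n + 1) = r (n + 1) + β n • p n)
    (hα : ∀ n, α n = (r n ⬝ᵥ r n) / (p n ⬝ᵥ M.mulVec (p n)))
    (hr : ∀ n, r (n + 1) = r n - α n • M.mulVec (p n))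
    (hβ : ∀ n, β n = (r (n + 1) ⬝ᵥ r (n + 1)) / (r n ⬝ᵥ r n))
    (k : ℕ) (hbreak : ∀ n < k, r n ⬝ᵥ r n ≠ 0 ∧ p n ⬝ᵥ M.mulVec (p n) ≠ 0) :
    ∀ n, n ≤ k → ∀ i, i < n → r n ⬝ᵥ r i = 0 ∧ p n ⬝ᵥ M.mulVec (p i) = 0 := by
  have hα_ne : ∀ i, i < k → α i ≠ 0 := fun i hi => by
    rw [hα]; exact div_ne_zero (hbreak i hi).1 (hbreak i hi).2
  have hMp : ∀ i, i < k → M.mulVec (p i) = (α i)⁻¹ • (r i - r (i + 1)) := by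
    intro i hik
    have h := hr i
    have : α i • M.mulVec (p i) = r i - r (i + 1) := by rw [h]; abel
    rw [← this, smul_smul, inv_mul_cancel₀ (hα_ne i hik), one_smul]
  intro n
  induction n with
  | zero => intro _ i hi; omega
  | succ n ih =>
    intro hn1 i hi
    have hnk : n < k := by omega
    have IH := ih (le_of_lt hnk)
    have hppn : p n ⬝ᵥ M.mulVec (p n) ≠ 0 := (hbreak n hnk).2
    have hrrn : r n ⬝ᵥ r n ≠ 0 := (hbreak n hnk).1
    -- p n ⬝ᵥ M r i = 0 for i < n
    have hpMr : ∀ i, i < n → p n ⬝ᵥ M.mulVec (r i) = 0 := by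
      intro i hi
      cases i with
      | zero =>
        rw [← hp0]
        exact (IH 0 hi).2
      | succ j =>
        have hrj : r (j + 1) = p (j + 1) - β j • p j := by rw [hp j]; abel
        rw [hrj, mulVec_sub, mulVec_smul, dotProduct_sub, dotProduct_smul,
          (IH (j + 1) hi).2, (IH j (by omega)).2]
        simp
    -- first part: residual orthogonality
    have hr1 : ∀ i, i < n + 1 → r (n + 1) ⬝ᵥ r i = 0 := by
      intro i hi
      rw [hr n, sub_dotProduct, smul_dotProduct, symm_dot hM]
      rcases Nat.lt_succ_iff_lt_or_eq.mp hi with hi' | rfl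
      · rw [(IH i hi').1, hpMr i hi']
        simp
      · have hpn : p i ⬝ᵥ M.mulVec (r i) = p i ⬝ᵥ M.mulVec (p i) := by
          cases i with
          | zero => rw [hp0]
          | succ j =>
            have hrj : r (j + 1) = p (j + 1) - β j • p j := by rw [hp j]; abel
            rw [hrj, mulVec_sub, mulVec_smul, dotProduct_sub, dotProduct_smul,
              (IH j (by omega)).2]
            rw [smul_zero, sub_zero]
        rw [hpn, hα i, smul_eq_mul, div_mul_cancel₀ _ hppn, sub_self]
    refine ⟨hr1 i hi, ?_⟩
    rw [hp n, add_dotProduct, smul_dotProduct]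
    rcases Nat.lt_succ_iff_lt_or_eq.mp hi with hi' | rfl
    · rw [(IH i hi').2, hMp i (by omega), dotProduct_smul, smul_eq_mul, dotProduct_sub,
        hr1 i (by omega), hr1 (i + 1) (by omega)]
      simp
    · have e1 : r (i + 1) ⬝ᵥ M.mulVec (p i) = (α i)⁻¹ * (0 - r (i + 1) ⬝ᵥ r (i + 1)) := by
        rw [hMp i (by omega), dotProduct_smul, smul_eq_mul, dotProduct_sub, hr1 i (by omega)]
      rw [e1, hβ i, hα i, inv_div, smul_eq_mul]
      field_simp
      ring
  

variable (hM : Mᵀ = M) (hr0 : r 0 = b) (hp0 : p 0 = r 0)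
    (hp : ∀ n, p (n + 1) = r (n + 1) + β n • p n)
    (hα : ∀ n, α n = (r n ⬝ᵥ r n) / (p n ⬝ᵥ M.mulVec (p n)))
    (hr : ∀ n, r (n + 1) = r n - α n • M.mulVec (p n))
    (hβ : ∀ n, β n = (r (n + 1) ⬝ᵥ r (n + 1)) / (r n ⬝ᵥ r n))
    (k : ℕ) (hbreak : ∀ n < k, r n ⬝ᵥ r n ≠ 0 ∧ p n ⬝ᵥ M.mulVec (p n) ≠ 0)

include hM hr0 hp0 hp hα hr hβ hbreak

lemma indep_r {n : ℕ} (hn : n ≤ k) : LinearIndependent ℂ (fun i : Fin n => r i) := by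
  have hOrth := ortho hM hr0 hp0 hp hα hr hβ k hbreak
  rw [Fintype.linearIndependent_iff]
  intro g hg j
  have h2 := congrArg (· ⬝ᵥ r (j : ℕ)) hg
  simp only [sum_dot, smul_dotProduct, smul_eq_mul, zero_dotProduct] at h2
  rw [Finset.sum_eq_single j ?h0 (by simp)] at h2
  · have hrj : r (j : ℕ) ⬝ᵥ r (j : ℕ) ≠ 0 := (hbreak j (lt_of_lt_of_le j.2 hn)).1
    exact (mul_eq_zero.mp h2).resolve_right hrj
  · intro i _ hij
    have : r (i : ℕ) ⬝ᵥ r (j : ℕ) = 0 := by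
      rcases lt_or_gt_of_ne (fun hc => hij (Fin.ext hc)) with h | h
      · rw [dotProduct_comm]
        exact (hOrth j (le_trans (le_of_lt j.2) hn) i h).1
      · exact (hOrth i (le_trans (le_of_lt i.2) hn) j h).1
    rw [this, mul_zero]

lemma K_eq_span_r {n : ℕ} (hn : n ≤ k) :
    K M b n = span ℂ (Set.range fun i : Fin n => r i) := by
  have hle : span ℂ (Set.range fun i : Fin n => r i) ≤ K M b n := by
    rw [span_le]
    rintro x ⟨i, rfl⟩
    exact K_mono i.2 (mem_station hr0 hp0 hp hr i).1
  have h1 : finrank ℂ (span ℂ (Set.range fun i : Fin n => r (i : ℕ))) = n := by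
    rw [finrank_span_eq_card (R := ℂ) (indep_r hM hr0 hp0 hp hα hr hβ k hbreak hn)]
    simp
  have h2 : finrank ℂ (K M b n) ≤ n := by
    have := finrank_range_le_card (R := ℂ) (fun i : Fin n => (M ^ (i : ℕ)).mulVec b)
    rw [Fintype.card_fin] at this
    exact this
  exact (Submodule.eq_of_le_of_finrank_le hle (h2.trans h1.ge)).symm

lemma finrank_K {n : ℕ} (hn : n ≤ k) : finrank ℂ (K M b n) = n := by
  rw [K_eq_span_r hM hr0 hp0 hp hα hr hβ k hbreak hn,
    finrank_span_eq_card (indep_r hM hr0 hp0 hp hα hr hβ k hbreak hn)]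
  simp

lemma perp_K {n : ℕ} (hn : n ≤ k) {v : Fin N → ℂ} (hv : v ∈ K M b n) :
    r n ⬝ᵥ v = 0 := by
  rw [K_eq_span_r hM hr0 hp0 hp hα hr hβ k hbreak hn,
    mem_span_range_iff_exists_fun] at hv
  obtain ⟨c, rfl⟩ := hv
  rw [dotProduct_comm, sum_dot]
  refine Finset.sum_eq_zero fun i _ => ?_
  rw [smul_dotProduct, dotProduct_comm,
    (ortho hM hr0 hp0 hp hα hr hβ k hbreak n hn i i.2).1, smul_zero]

lemma nondeg_K {n : ℕ} (hn : n ≤ k) {v : Fin N → ℂ} (hv : v ∈ K M b n)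
    (hperp : ∀ i, i < n → v ⬝ᵥ r i = 0) : v = 0 := by
  rw [K_eq_span_r hM hr0 hp0 hp hα hr hβ k hbreak hn,
    mem_span_range_iff_exists_fun] at hv
  obtain ⟨c, rfl⟩ := hv
  suffices hc : ∀ j, c j = 0 by simp [hc]
  intro j
  have h2 := hperp j j.2
  simp only [sum_dot, smul_dotProduct, smul_eq_mul] at h2
  rw [Finset.sum_eq_single j ?h0 (by simp)] at h2
  · exact (mul_eq_zero.mp h2).resolve_right (hbreak j (lt_of_lt_of_le j.2 hn)).1
  · intro i _ hij
    have hOrth := ortho hM hr0 hp0 hp hα hr hβ k hbreak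
    have : r (i : ℕ) ⬝ᵥ r (j : ℕ) = 0 := by
      rcases lt_or_gt_of_ne (fun hc => hij (Fin.ext hc)) with h | h
      · rw [dotProduct_comm]
        exact (hOrth j (le_trans (le_of_lt j.2) hn) i h).1
      · exact (hOrth i (le_trans (le_of_lt i.2) hn) j h).1
    rw [this, mul_zero]

omit hM hr0 hp0 hp hα hr hβ hbreak in
lemma K_collapse {n : ℕ} {y : Fin N → ℂ} (hy : y ∈ K M b n) (hb2 : b = M.mulVec y)
    (hfr : finrank ℂ (K M b n) = n) : K M b (n + 1) = K M b n := by
  set V := span ℂ (Set.range fun i : Fin n => (M ^ ((i : ℕ) + 1)).mulVec b) with hV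
  have hMyV : M.mulVec y ∈ V := by
    have hm : M.mulVecLin y ∈ Submodule.map M.mulVecLin (K M b n) := Submodule.mem_map_of_mem hy
    rw [K, Submodule.map_span] at hm
    refine span_le.mpr ?_ hm
    rintro _ ⟨_, ⟨i, rfl⟩, rfl⟩
    simp only [mulVecLin_apply, mulVec_mulVec]
    rw [← pow_succ']
    exact subset_span ⟨i, rfl⟩
  have hKV : K M b (n + 1) ≤ V := by
    rw [K, span_le]
    rintro _ ⟨i, rfl⟩
    have hi' : (i : ℕ) < n + 1 := i.2
    by_cases h0 : (i : ℕ) = 0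
    · simp only [h0, pow_zero, one_mulVec]
      rw [hb2]
      exact hMyV
    · have hj : (i : ℕ) - 1 < n := by omega
      have hmem : (M ^ (((⟨(i : ℕ) - 1, hj⟩ : Fin n) : ℕ) + 1)).mulVec b ∈ V :=
        subset_span ⟨_, rfl⟩
      simpa [show (i : ℕ) - 1 + 1 = (i : ℕ) by omega] using hmem
  have h2 : finrank ℂ (K M b (n + 1)) ≤ n := by
    refine le_trans (Submodule.finrank_mono hKV) ?_
    have := finrank_range_le_card (R := ℂ) (fun i : Fin n => (M ^ ((i : ℕ) + 1)).mulVec b)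
    simpa [Set.finrank, Fintype.card_fin] using this
  exact (Submodule.eq_of_le_of_finrank_le (K_mono (by omega)) (by rw [hfr]; exact h2)).symm

end Iteration

end COCGFrommer

open COCGFrommer in
/-- Corollary of Frommer's theorem: collinearity of COCG residuals for the
seed system `A x = b` and the shifted system `(A + σ I) x = b`, both started
from the zero initial guess. -/
theorem stmt_10 {N : ℕ} (A : Matrix (Fin N) (Fin N) ℂ) (hA : Aᵀ = A)
    (b : Fin N → ℂ) (σ : ℂ)
    (hAσ : (A + σ • (1 : Matrix (Fin N) (Fin N) ℂ))ᵀ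
            = A + σ • (1 : Matrix (Fin N) (Fin N) ℂ))
    -- COCG iteration for the seed system `A x = b`, with `x₀ = 0`:
    (r p : ℕ → Fin N → ℂ) (α β : ℕ → ℂ)
    (hr0 : r 0 = b)
    (hp0 : p 0 = r 0)
    (hp : ∀ n, p (n + 1) = r (n + 1) + β n • p n)
    (hα : ∀ n, α n = (r n ⬝ᵥ r n) / (p n ⬝ᵥ A.mulVec (p n)))
    (hr : ∀ n, r (n + 1) = r n - α n • A.mulVec (p n))
    (hβ : ∀ n, β n = (r (n + 1) ⬝ᵥ r (n + 1)) / (r n ⬝ᵥ r n))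
    -- COCG iteration for the shifted system `(A + σ I) x = b`, with `x₀ = 0`:
    (rσ pσ : ℕ → Fin N → ℂ) (ασ βσ : ℕ → ℂ)
    (hrσ0 : rσ 0 = b)
    (hpσ0 : pσ 0 = rσ 0)
    (hpσ : ∀ n, pσ (n + 1) = rσ (n + 1) + βσ n • pσ n)
    (hασ : ∀ n, ασ n = (rσ n ⬝ᵥ rσ n) /
      (pσ n ⬝ᵥ (A + σ • (1 : Matrix (Fin N) (Fin N) ℂ)).mulVec (pσ n)))
    (hrσ : ∀ n, rσ (n + 1) = rσ n
      - ασ n • (A + σ • (1 : Matrix (Fin N) (Fin N) ℂ)).mulVec (pσ n))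
    (hβσ : ∀ n, βσ n = (rσ (n + 1) ⬝ᵥ rσ (n + 1)) / (rσ n ⬝ᵥ rσ n))
    -- no breakdown up to step `k`:
    (k : ℕ) (hk : 1 ≤ k)
    (hbreak : ∀ n < k, r n ⬝ᵥ r n ≠ 0 ∧ p n ⬝ᵥ A.mulVec (p n) ≠ 0)
    (hbreakσ : ∀ n < k, rσ n ⬝ᵥ rσ n ≠ 0 ∧
      pσ n ⬝ᵥ (A + σ • (1 : Matrix (Fin N) (Fin N) ℂ)).mulVec (pσ n) ≠ 0) :
    ∀ n ≤ k, ∃ πσ : ℂ, r n = πσ • rσ n := by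
  intro n hn
  set Mσ : Matrix (Fin N) (Fin N) ℂ := A + σ • 1 with hMσ
  have hKs : ∀ m, K Mσ b m = K A b m := fun m => K_shift A σ b m
  have orthoA := ortho hA hr0 hp0 hp hα hr hβ k hbreak
  have orthoS := ortho hAσ hrσ0 hpσ0 hpσ hασ hrσ hβσ k hbreakσ
  have memA := mem_station (M := A) hr0 hp0 hp hr
  have memS := mem_station (M := Mσ) hrσ0 hpσ0 hpσ hrσ
  -- decompositions in the common Krylov space
  have hrs_mem : rσ n ∈ K A b (n + 1) := by rw [← hKs]; exact (memS n).1
  have hr_mem : r n ∈ K A b (n + 1) := (memA n).1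
  rw [K, mem_span_range_iff_exists_fun] at hrs_mem hr_mem
  obtain ⟨c, hc⟩ := hrs_mem
  obtain ⟨d, hd⟩ := hr_mem
  rw [Fin.sum_univ_castSucc] at hc hd
  set Sc : Fin N → ℂ :=
    ∑ i : Fin n, c i.castSucc • (A ^ ((i.castSucc : ℕ))).mulVec b with hSc
  set Sd : Fin N → ℂ :=
    ∑ i : Fin n, d i.castSucc • (A ^ ((i.castSucc : ℕ))).mulVec b with hSd
  have hSc_mem : Sc ∈ K A b n :=
    sum_mem fun i _ => Submodule.smul_mem _ _ (pow_mem_K (by simpa using i.2))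
  have hSd_mem : Sd ∈ K A b n :=
    sum_mem fun i _ => Submodule.smul_mem _ _ (pow_mem_K (by simpa using i.2))
  set cl : ℂ := c (Fin.last n) with hcl_def
  set dl : ℂ := d (Fin.last n) with hdl_def
  set v : Fin N → ℂ := dl • rσ n - cl • r n with hv_def
  have hveq : v = dl • Sc - cl • Sd := by
    rw [hv_def, ← hc, ← hd]
    module
  have hv_mem : v ∈ K A b n := by
    rw [hveq]
    exact sub_mem (Submodule.smul_mem _ _ hSc_mem) (Submodule.smul_mem _ _ hSd_mem)
  have hv_perp : ∀ i, i < n → v ⬝ᵥ r i = 0 := by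
    intro i hi
    have h1 : r n ⬝ᵥ r i = 0 := (orthoA n hn i hi).1
    have h2 : rσ n ⬝ᵥ r i = 0 := by
      refine perp_K hAσ hrσ0 hpσ0 hpσ hασ hrσ hβσ k hbreakσ hn ?_
      rw [hKs]
      exact K_mono hi (memA i).1
    rw [hv_def, sub_dotProduct, smul_dotProduct, smul_dotProduct, h1, h2]
    simp
  have hv0 : v = 0 := nondeg_K hA hr0 hp0 hp hα hr hβ k hbreak hn hv_mem hv_perp
  have key : cl • r n = dl • rσ n := by
    have := sub_eq_zero.mp (hv_def ▸ hv0)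
    exact this.symm
  by_cases hcl : cl = 0
  · -- `rσ n` lies in `K n` and is orthogonal to it, hence vanishes; then `r n = 0` too.
    have hrs_own : rσ n ∈ K A b n := by
      rw [← hc, hcl, zero_smul, add_zero]
      exact hSc_mem
    have hrs0 : rσ n = 0 := by
      refine nondeg_K hAσ hrσ0 hpσ0 hpσ hασ hrσ hβσ k hbreakσ hn ?_
        (fun i hi => (orthoS n hn i hi).1)
      rw [hKs]
      exact hrs_own
    obtain ⟨y, hy, hyr⟩ := resid_sub (M := Mσ) hrσ0 hpσ hrσ hpσ0 n
    have hb2 : b = Mσ.mulVec y := by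
      have hz : b - Mσ.mulVec y = 0 := by rw [← hyr, hrs0]
      exact (sub_eq_zero.mp hz)
    have hfr : finrank ℂ (K Mσ b n) = n :=
      finrank_K hAσ hrσ0 hpσ0 hpσ hασ hrσ hβσ k hbreakσ hn
    have hcol : K Mσ b (n + 1) = K Mσ b n := K_collapse hy hb2 hfr
    have hrK : r n ∈ K A b n := by
      rw [← hKs, ← hcol, hKs]
      exact (memA n).1
    have hr_zero : r n = 0 :=
      nondeg_K hA hr0 hp0 hp hα hr hβ k hbreak hn hrK (fun i hi => (orthoA n hn i hi).1)
    exact ⟨0, by rw [hr_zero, zero_smul]⟩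
  · refine ⟨dl / cl, ?_⟩
    have h1 : r n = cl⁻¹ • (cl • r n) := by
      rw [smul_smul, inv_mul_cancel₀ hcl, one_smul]
    rw [h1, key, smul_smul, div_eq_inv_mul]
end

section
/- Let α_n (n ≥ 0) be nonzero complex scalars, β_n (n ≥ 0) complex scalars, and R_n ∈ ℂ[X] the residual polynomials defined by the three-term recurrence R_0 = 1, R_1 = 1 − α_0 X, R_n = (1 + (β_{n−2}/α_{n−2}) α_{n−1} − α_{n−1} X) R_{n−1} − (β_{n−2}/α_{n−2}) α_{n−1} R_{n−2} for n ≥ 2. Fix σ ∈ ℂ, set π_n := R_n(−σ), and assume π_n ≠ 0 for all n. Define shifted parameters α_n^σ := (π_n/π_{n+1}) α_n and β_n^σ := (π_n/π_{n+1})² β_n, and let R_n^σ ∈ ℂ[X] be defined by the same three-term recurrence with α_n^σ, β_n^σ in place of α_n, β_n. Then for every n, the polynomial identity R_n(X) = π_n · R_n^σ(X + σ) holds in ℂ[X]. -/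
open Polynomial

theorem stmt_12 (α β : ℕ → ℂ) (hα : ∀ n, α n ≠ 0)
    (R : ℕ → Polynomial ℂ)
    (hR0 : R 0 = 1)
    (hR1 : R 1 = 1 - C (α 0) * X)
    (hRrec : ∀ n, R (n + 2) =
      (C (1 + (β n / α n) * α (n + 1)) - C (α (n + 1)) * X) * R (n + 1)
        - C ((β n / α n) * α (n + 1)) * R n)
    (σ : ℂ) (π : ℕ → ℂ) (hπ : ∀ n, π n = (R n).eval (-σ))
    (hπne : ∀ n, π n ≠ 0)
    (ασ βσ : ℕ → ℂ)
    (hασ : ∀ n, ασ n = (π n / π (n + 1)) * α n)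
    (hβσ : ∀ n, βσ n = (π n / π (n + 1)) ^ 2 * β n)
    (Rσ : ℕ → Polynomial ℂ)
    (hRσ0 : Rσ 0 = 1)
    (hRσ1 : Rσ 1 = 1 - C (ασ 0) * X)
    (hRσrec : ∀ n, Rσ (n + 2) =
      (C (1 + (βσ n / ασ n) * ασ (n + 1)) - C (ασ (n + 1)) * X) * Rσ (n + 1)
        - C ((βσ n / ασ n) * ασ (n + 1)) * Rσ n) :
    ∀ n, R n = C (π n) * (Rσ n).comp (X + C σ) := by
  have hπ0 : π 0 = 1 := by rw [hπ, hR0]; simp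
  have hπ1 : π 1 = 1 + α 0 * σ := by rw [hπ, hR1]; simp
  have base0 : R 0 = C (π 0) * (Rσ 0).comp (X + C σ) := by
    rw [hR0, hRσ0, hπ0]; simp
  have base1 : R 1 = C (π 1) * (Rσ 1).comp (X + C σ) := by
    rw [hR1, hRσ1, hασ 0]
    simp only [sub_comp, mul_comp, C_comp, X_comp, one_comp]
    have E : C (π 1) * C (π 0 / π 1 * α 0) = C (α 0) := by
      rw [← C_mul]; congr 1; rw [hπ0]; field_simp [hπne 1]
    have E' : C (π 1) = 1 + C (α 0) * C σ := by
      rw [hπ1]; simp [C_add, C_mul]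
    linear_combination (X + C σ) * E - E'
  suffices h : ∀ n, R n = C (π n) * (Rσ n).comp (X + C σ) ∧
      R (n + 1) = C (π (n + 1)) * (Rσ (n + 1)).comp (X + C σ) from fun n => (h n).1
  intro n
  induction n with
  | zero => exact ⟨base0, base1⟩
  | succ k ih =>
    refine ⟨ih.2, ?_⟩
    -- scalar identities
    have s1 : π (k + 1) * α (k + 1) = π (k + 2) * ασ (k + 1) := by
      rw [hασ]; field_simp [hπne (k + 2)]
    have s2 : π k * (β k / α k * α (k + 1)) =
        π (k + 2) * (βσ k / ασ k * ασ (k + 1)) := by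
      rw [hβσ, hασ, hασ]
      field_simp [hπne k, hπne (k + 1), hπne (k + 2), hα k]
    have hrec : π (k + 2) =
        (1 + β k / α k * α (k + 1) + α (k + 1) * σ) * π (k + 1)
          - (β k / α k * α (k + 1)) * π k := by
      simp only [hπ, hRrec k]
      simp [eval_sub, eval_mul, eval_add, eval_one, eval_C, eval_X]
    have s3 : π (k + 1) * (1 + β k / α k * α (k + 1)) =
        π (k + 2) * (1 + βσ k / ασ k * ασ (k + 1)) - π (k + 2) * ασ (k + 1) * σ := by
      linear_combination -hrec + s2 - σ * s1
    have E1 : C (π (k + 1)) * C (α (k + 1)) = C (π (k + 2)) * C (ασ (k + 1)) := by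
      rw [← C_mul, ← C_mul, s1]
    have E2 : C (π k) * C (β k / α k * α (k + 1)) =
        C (π (k + 2)) * C (βσ k / ασ k * ασ (k + 1)) := by
      rw [← C_mul, ← C_mul, s2]
    have E3 : C (π (k + 1)) * C (1 + β k / α k * α (k + 1)) =
        C (π (k + 2)) * C (1 + βσ k / ασ k * ασ (k + 1))
          - C (π (k + 2)) * C (ασ (k + 1)) * C σ := by
      rw [← C_mul, ← C_mul, ← C_mul, ← C_mul, ← C_sub, s3]
    rw [hRrec k, hRσrec k, ih.1, ih.2]
    simp only [sub_comp, mul_comp, C_comp, X_comp]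
    set S0 := (Rσ k).comp (X + C σ)
    set S1 := (Rσ (k + 1)).comp (X + C σ)
    linear_combination S1 * E3 - X * S1 * E1 - S0 * E2
end

section
/- (Correctness of the shifted COCG algorithm.) Let A be an N×N complex symmetric matrix (A = Aᵀ), b ∈ ℂ^N, and σ_s, σ_i ∈ ℂ. Let the COCG iteration applied to the seed system (A + σ_s I) x = b with x_0 = 0 generate residuals r_n, directions p_n, and scalars α_n, β_n, with all α_n nonzero, and let R_n ∈ ℂ[X] be the associated residual polynomials. Set π_n := R_n(σ_s − σ_i) and assume π_n ≠ 0 for all n. Define the shifted sequences by x_0^{(i)} = 0, p_{−1}^{(i)} = 0, and for n ≥ 0: β_{n−1}^{(i)} = (π_{n−1}/π_n)² β_{n−1}, α_n^{(i)} = (π_n/π_{n+1}) α_n, p_n^{(i)} = (1/π_n) r_n + β_{n−1}^{(i)} p_{n−1}^{(i)}, x_{n+1}^{(i)} = x_n^{(i)} + α_n^{(i)} p_n^{(i)}. Then for every n, the residual of the shifted system satisfies b − (A + σ_i I) x_n^{(i)} = (1/π_n) r_n. -/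
/-!
Write `f` for the seed operator `A + σs I` and `g = f - τ` with `τ = σs - σi` for the shifted one.
Eliminating the directions from the coupled two-term recurrences gives a three-term recurrence for
the residuals `r_n` which has exactly the coefficients of the recurrence defining `R_n`; evaluating
the latter at `τ` gives the matching scalar recurrence for `π_n`. With the rescaled shifted
directions `s_n = π_n² p_n^{(i)}`, these two recurrences show by induction that
`α_n g s_n = π_{n+1} r_n - π_n r_{n+1}`, and this is precisely the update needed to carry the
identity `b - g x_n^{(i)} = r_n / π_n` from `n` to `n + 1`.
-/

open Matrix Polynomial

namespace COCG

theorem residual_three_term {K V : Type*} [CommRing K] [AddCommGroup V] [Module K V]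
    {f : V →ₗ[K] V} {r p : ℕ → V} {α β : ℕ → K}
    (hp : ∀ n, p (n + 1) = r (n + 1) + β n • p n)
    (hr : ∀ n, r (n + 1) = r n - α n • f (p n)) (n : ℕ) :
    (α n * α (n + 1)) • f (r (n + 1))
      = (α n + β n * α (n + 1)) • r (n + 1) - α n • r (n + 2) - (β n * α (n + 1)) • r n := by
  have hfr : f (r (n + 1)) = f (p (n + 1)) - β n • f (p n) := by
    rw [hp n, map_add, map_smul]; module
  linear_combination (norm := module)
    (α n * α (n + 1)) • hfr + α n • hr (n + 1) - (β n * α (n + 1)) • hr n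

section

variable {K V : Type*} [Field K] [AddCommGroup V] [Module K V]
  {f g : V →ₗ[K] V} {r p : ℕ → V} {α β : ℕ → K}

theorem eval_succ_succ_of_rec {R : ℕ → K[X]} {n : ℕ} (hα : α n ≠ 0)
    (hRrec : R (n + 2) =
      (C (1 + (β n / α n) * α (n + 1)) - C (α (n + 1)) * X) * R (n + 1)
        - C ((β n / α n) * α (n + 1)) * R n) (z : K) :
    α n * (R (n + 2)).eval z
      = (α n + β n * α (n + 1) - α n * α (n + 1) * z) * (R (n + 1)).eval z
        - β n * α (n + 1) * (R n).eval z := by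
  simp only [hRrec, eval_sub, eval_mul, eval_C, eval_X]
  field_simp

theorem smul_apply_shiftedDirection {τ : K} (hfg : ∀ v, f v = g v + τ • v)
    (hp0 : p 0 = r 0) (hp : ∀ n, p (n + 1) = r (n + 1) + β n • p n)
    (hr : ∀ n, r (n + 1) = r n - α n • f (p n)) (hα : ∀ n, α n ≠ 0)
    {π : ℕ → K} (hπ0 : π 0 = 1) (hπ1 : π 1 = 1 - α 0 * τ)
    (hπrec : ∀ n, α n * π (n + 2)
      = (α n + β n * α (n + 1) - α n * α (n + 1) * τ) * π (n + 1) - β n * α (n + 1) * π n)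
    {s : ℕ → V} (hs0 : s 0 = r 0) (hs : ∀ n, s (n + 1) = π (n + 1) • r (n + 1) + β n • s n)
    (n : ℕ) : α n • g (s n) = π (n + 1) • r n - π n • r (n + 1) := by
  induction n with
  | zero =>
    have hr0 := hr 0
    rw [hp0] at hr0
    rw [hs0, hπ0, hπ1]
    linear_combination (norm := module) -α 0 • hfg (r 0) + hr0
  | succ n ih =>
    have hπv : (α n * π (n + 2)) • r (n + 1) = ((α n + β n * α (n + 1) - α n * α (n + 1) * τ)
        * π (n + 1) - β n * α (n + 1) * π n) • r (n + 1) := by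
      rw [hπrec n]
    apply smul_right_injective V (hα n)
    simp only [hs n, map_add, map_smul]
    linear_combination (norm := module)
      -(π (n + 1) * α n * α (n + 1)) • hfg (r (n + 1)) + π (n + 1) • residual_three_term hp hr n
        + (β n * α (n + 1)) • ih - hπv

theorem shifted_residual {τ : K} (hfg : ∀ v, f v = g v + τ • v) (b : V) (hr0 : r 0 = b)
    (hp0 : p 0 = r 0) (hp : ∀ n, p (n + 1) = r (n + 1) + β n • p n)
    (hr : ∀ n, r (n + 1) = r n - α n • f (p n)) (hα : ∀ n, α n ≠ 0)
    (R : ℕ → K[X]) (hR0 : R 0 = 1) (hR1 : R 1 = 1 - C (α 0) * X)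
    (hRrec : ∀ n, R (n + 2) =
      (C (1 + (β n / α n) * α (n + 1)) - C (α (n + 1)) * X) * R (n + 1)
        - C ((β n / α n) * α (n + 1)) * R n)
    (π : ℕ → K) (hπ : ∀ n, π n = (R n).eval τ) (hπne : ∀ n, π n ≠ 0)
    (xi pi : ℕ → V) (hxi0 : xi 0 = 0) (hpi0 : pi 0 = (1 / π 0) • r 0)
    (hpi : ∀ n, pi (n + 1) = (1 / π (n + 1)) • r (n + 1)
      + ((π n / π (n + 1)) ^ 2 * β n) • pi n)
    (hxi : ∀ n, xi (n + 1) = xi n + ((π n / π (n + 1)) * α n) • pi n) (n : ℕ) :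
    b - g (xi n) = (1 / π n) • r n := by
  have hπ0 : π 0 = 1 := by simp [hπ, hR0]
  have hπ1 : π 1 = 1 - α 0 * τ := by simp [hπ, hR1]
  have hπrec : ∀ n, α n * π (n + 2) = (α n + β n * α (n + 1) - α n * α (n + 1) * τ)
      * π (n + 1) - β n * α (n + 1) * π n := fun n => by
    simp only [hπ]; exact eval_succ_succ_of_rec (hα n) (hRrec n) τ
  have hs : ∀ n, π (n + 1) ^ 2 • pi (n + 1) = π (n + 1) • r (n + 1) + β n • π n ^ 2 • pi n := by
    intro n
    rw [hpi n]
    match_scalars <;> field_simp [hπne n, hπne (n + 1)]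
  have key := smul_apply_shiftedDirection hfg hp0 hp hr hα hπ0 hπ1 hπrec
    (s := fun n => π n ^ 2 • pi n) (by simp [hpi0, hπ0]) hs
  suffices h : π n • (b - g (xi n)) = r n by
    rw [← h, smul_smul, one_div, inv_mul_cancel₀ (hπne n), one_smul]
  induction n with
  | zero => simp [hxi0, hπ0, hr0]
  | succ n ih =>
    have hgpi : (π n * π (n + 1) * ((π n / π (n + 1)) * α n)) • g (pi n)
        = π (n + 1) • r n - π n • r (n + 1) := by
      rw [← key n, map_smul, smul_smul]
      congr 1
      field_simp [hπne (n + 1)]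
    apply smul_right_injective V (hπne n)
    simp only [hxi n, map_add, map_smul]
    linear_combination (norm := module) π (n + 1) • ih - hgpi

end

end COCG

theorem stmt_13_general {N : ℕ} (A : Matrix (Fin N) (Fin N) ℂ)
    (b : Fin N → ℂ) (σs σi : ℂ)
    -- COCG iteration for the seed system `(A + σs I) x = b`, with `x₀ = 0`:
    (r p : ℕ → Fin N → ℂ) (α β : ℕ → ℂ)
    (hr0 : r 0 = b)
    (hp0 : p 0 = r 0)
    (hp : ∀ n, p (n + 1) = r (n + 1) + β n • p n)
    (hr : ∀ n, r (n + 1) = r n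
      - α n • (A + σs • (1 : Matrix (Fin N) (Fin N) ℂ)).mulVec (p n))
    (hαne : ∀ n, α n ≠ 0)
    -- the residual polynomials of the seed iteration:
    (R : ℕ → Polynomial ℂ)
    (hR0 : R 0 = 1)
    (hR1 : R 1 = 1 - C (α 0) * X)
    (hRrec : ∀ n, R (n + 2) =
      (C (1 + (β n / α n) * α (n + 1)) - C (α (n + 1)) * X) * R (n + 1)
        - C ((β n / α n) * α (n + 1)) * R n)
    -- the collinearity factors `π_n := R_n(σs - σi)`, assumed nonzero:
    (π : ℕ → ℂ) (hπ : ∀ n, π n = (R n).eval (σs - σi))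
    (hπne : ∀ n, π n ≠ 0)
    -- the shifted sequences:
    (xi pi : ℕ → Fin N → ℂ)
    (hxi0 : xi 0 = 0)
    (hpi0 : pi 0 = (1 / π 0) • r 0)
    (hpi : ∀ n, pi (n + 1) = (1 / π (n + 1)) • r (n + 1)
      + ((π n / π (n + 1)) ^ 2 * β n) • pi n)
    (hxi : ∀ n, xi (n + 1) = xi n + ((π n / π (n + 1)) * α n) • pi n) :
    ∀ n, b - (A + σi • (1 : Matrix (Fin N) (Fin N) ℂ)).mulVec (xi n)
      = (1 / π n) • r n := by
  have hshift : ∀ v, (A + σs • (1 : Matrix (Fin N) (Fin N) ℂ)).mulVecLin v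
      = (A + σi • (1 : Matrix (Fin N) (Fin N) ℂ)).mulVecLin v + (σs - σi) • v := by
    intro v
    simp only [mulVecLin_apply, add_mulVec, smul_mulVec, one_mulVec]
    module
  exact COCG.shifted_residual hshift b hr0 hp0 hp hr hαne R hR0 hR1 hRrec π hπ hπne
    xi pi hxi0 hpi0 hpi hxi

/-- Correctness of the shifted COCG algorithm: the vector `(1/π_n) r_n` is the
true residual of the shifted iterate `x_n^{(i)}`. -/
theorem stmt_13 {N : ℕ} (A : Matrix (Fin N) (Fin N) ℂ) (hA : Aᵀ = A)
    (b : Fin N → ℂ) (σs σi : ℂ)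
    -- COCG iteration for the seed system `(A + σs I) x = b`, with `x₀ = 0`:
    (r p : ℕ → Fin N → ℂ) (α β : ℕ → ℂ)
    (hr0 : r 0 = b)
    (hp0 : p 0 = r 0)
    (hp : ∀ n, p (n + 1) = r (n + 1) + β n • p n)
    (hα : ∀ n, α n = (r n ⬝ᵥ r n) /
      (p n ⬝ᵥ (A + σs • (1 : Matrix (Fin N) (Fin N) ℂ)).mulVec (p n)))
    (hr : ∀ n, r (n + 1) = r n
      - α n • (A + σs • (1 : Matrix (Fin N) (Fin N) ℂ)).mulVec (p n))
    (hβ : ∀ n, β n = (r (n + 1) ⬝ᵥ r (n + 1)) / (r n ⬝ᵥ r n))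
    (hαne : ∀ n, α n ≠ 0)
    -- the residual polynomials of the seed iteration:
    (R : ℕ → Polynomial ℂ)
    (hR0 : R 0 = 1)
    (hR1 : R 1 = 1 - C (α 0) * X)
    (hRrec : ∀ n, R (n + 2) =
      (C (1 + (β n / α n) * α (n + 1)) - C (α (n + 1)) * X) * R (n + 1)
        - C ((β n / α n) * α (n + 1)) * R n)
    -- the collinearity factors `π_n := R_n(σs - σi)`, assumed nonzero:
    (π : ℕ → ℂ) (hπ : ∀ n, π n = (R n).eval (σs - σi))
    (hπne : ∀ n, π n ≠ 0)
    -- the shifted sequences: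
    (xi pi : ℕ → Fin N → ℂ)
    (hxi0 : xi 0 = 0)
    (hpi0 : pi 0 = (1 / π 0) • r 0)
    (hpi : ∀ n, pi (n + 1) = (1 / π (n + 1)) • r (n + 1)
      + ((π n / π (n + 1)) ^ 2 * β n) • pi n)
    (hxi : ∀ n, xi (n + 1) = xi n + ((π n / π (n + 1)) * α n) • pi n) :
    ∀ n, b - (A + σi • (1 : Matrix (Fin N) (Fin N) ℂ)).mulVec (xi n)
      = (1 / π n) • r n :=
  stmt_13_general A b σs σi r p α β hr0 hp0 hp hr hαne R hR0 hR1 hRrec π hπ hπne xi pi hxi0 hpi0 hpi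
    hxi
end

section
/- (Consistency of the seed switching technique.) Let α_n (n ≥ 0) be nonzero complex scalars, β_n (n ≥ 0) complex scalars, and R_n ∈ ℂ[X] the residual polynomials defined by the three-term recurrence. Let σ, σ' ∈ ℂ, set π_n^σ := R_n(−σ) and assume π_n^σ ≠ 0 for all n. Let R_n^σ be the residual polynomials defined by the same three-term recurrence with the shifted parameters α_n^σ := (π_n^σ/π_{n+1}^σ) α_n and β_n^σ := (π_n^σ/π_{n+1}^σ)² β_n. Then for every n, the collinearity factor from the new seed σ to the system σ' satisfies R_n^σ(σ − σ') = R_n(−σ') / R_n(−σ). -/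
open Polynomial

lemma aux (p0 p1 p2 r0 r1 x0 x1 b s s' A : ℂ)
    (hp2 : p2 ≠ 0)
    (hrec : p2 = (1 + A + b * s) * p1 - A * p0)
    (h1 : p0 * x0 = r0) (h2 : p1 * x1 = r1) :
    p2 * ((1 + p0 / p2 * A - p1 / p2 * b * (s - s')) * x1 - p0 / p2 * A * x0)
      = (1 + A - b * (-s')) * r1 - A * r0 := by
  subst h1 h2
  field_simp
  rw [hrec]; ring

set_option maxHeartbeats 1600000 in
/-- Consistency of the seed switching technique: the collinearity factor from
the new seed `σ` to the system `σ'` is `R_n(−σ') / R_n(−σ)`. -/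
theorem stmt_14 (α β : ℕ → ℂ) (hα : ∀ n, α n ≠ 0)
    (R : ℕ → Polynomial ℂ)
    (hR0 : R 0 = 1)
    (hR1 : R 1 = 1 - C (α 0) * X)
    (hRrec : ∀ n, R (n + 2) =
      (C (1 + (β n / α n) * α (n + 1)) - C (α (n + 1)) * X) * R (n + 1)
        - C ((β n / α n) * α (n + 1)) * R n)
    (σ σ' : ℂ) (π : ℕ → ℂ) (hπ : ∀ n, π n = (R n).eval (-σ))
    (hπne : ∀ n, π n ≠ 0)
    (ασ βσ : ℕ → ℂ)
    (hασ : ∀ n, ασ n = (π n / π (n + 1)) * α n)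
    (hβσ : ∀ n, βσ n = (π n / π (n + 1)) ^ 2 * β n)
    (Rσ : ℕ → Polynomial ℂ)
    (hRσ0 : Rσ 0 = 1)
    (hRσ1 : Rσ 1 = 1 - C (ασ 0) * X)
    (hRσrec : ∀ n, Rσ (n + 2) =
      (C (1 + (βσ n / ασ n) * ασ (n + 1)) - C (ασ (n + 1)) * X) * Rσ (n + 1)
        - C ((βσ n / ασ n) * ασ (n + 1)) * Rσ n) :
    ∀ n, (Rσ n).eval (σ - σ') = (R n).eval (-σ') / (R n).eval (-σ) := by
  have key : ∀ n, π n * (Rσ n).eval (σ - σ') = (R n).eval (-σ') := by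
    intro n
    induction n using Nat.twoStepInduction with
    | zero => simp [hRσ0, hR0, hπ]
    | one =>
      have h0 : π 0 = 1 := by simp [hπ, hR0]
      rw [hRσ1, hR1]
      simp only [eval_sub, eval_one, eval_mul, eval_C, eval_X, hασ, h0]
      have h1 : π 1 = 1 + α 0 * σ := by simp [hπ, hR1]
      field_simp [hπne 1]
      rw [h1]; ring
    | more n ih1 ih2 =>
      have hπrec : π (n + 2) = (1 + (β n / α n) * α (n + 1) + α (n + 1) * σ) * π (n + 1)
          - (β n / α n) * α (n + 1) * π n := by
        rw [hπ, hRrec n]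
        simp only [eval_sub, eval_mul, eval_add, eval_one, eval_C, eval_X, ← hπ]
        ring
      have hc : βσ n / ασ n * ασ (n + 1)
          = π n / π (n + 2) * (β n / α n * α (n + 1)) := by
        rw [hβσ, hασ, hασ]
        field_simp [hπne n, hπne (n + 1), hπne (n + 2), hα n]
      rw [hRσrec n, hRrec n]
      simp only [eval_sub, eval_mul, eval_add, eval_one, eval_C, eval_X]
      rw [hc, hασ (n + 1)]
      linear_combination aux (π n) (π (n + 1)) (π (n + 2)) (eval (-σ') (R n))
        (eval (-σ') (R (n + 1))) (eval (σ - σ') (Rσ n)) (eval (σ - σ') (Rσ (n + 1)))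
        (α (n + 1)) σ σ' (β n / α n * α (n + 1)) (hπne (n + 2)) hπrec ih1 ih2
  intro n
  rw [← key n, ← hπ n, mul_comm, mul_div_assoc, div_self (hπne n), mul_one]
end
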